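/- Let p be a prime with ν_p(N) = 1 and suppose the p-part of χ is trivial. If f is a weight 1 newform of level N and character χ, then |a_p| = √p; but since any nonzero a_p of a weight 1 newform at a ramified prime is a root of unity (hence has absolute value 1 or 0), no such newform exists: S₁^new(N, χ) = 0. -/

import Mathlib

lemma Nat.Prime.one_lt_sqrt {p : ℕ} (hp : p.Prime) : 1 < √(p : ℝ) := by
  rw [Real.lt_sqrt zero_le_one, one_pow]
  exact_mod_cast hp.one_lt

lemma norm_le_one_of_eq_zero_or_pow_eq_one {α : Type*} [NormedRing α] [NormMulClass α]
    [NormOneClass α] {x : α} (hx : x = 0 ∨ ∃ n, 0 < n ∧ x ^ n = 1) : ‖x‖ ≤ 1 := by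
  rcases hx with rfl | hroot
  · simp
  · exact (isOfFinOrder_iff_pow_eq_one.2 hroot).norm_eq_one.le

theorem no_weight_one_newforms_steinberg_general (p : ℕ) (hp : p.Prime)
    (F : Type*) -- the set of weight 1 newforms of level N and character χ
    (ap : F → ℂ) -- the p-th Fourier coefficient
    (hLi : ∀ f : F, ‖ap f‖ = Real.sqrt p)
    (hDS : ∀ f : F, ap f = 0 ∨ ∃ n, 0 < n ∧ (ap f) ^ n = 1) :
    IsEmpty F :=
  ⟨fun f => (norm_le_one_of_eq_zero_or_pow_eq_one (hDS f)).not_gt (hLi f ▸ hp.one_lt_sqrt)⟩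

/-- Let p be a prime with ν_p(N) = 1 and χ_p trivial.  Given (Li) every weight 1
newform f of level N and character χ has |a_p(f)| = √p, and (Deligne–Serre) a_p(f)
is 0 or a root of unity, the space of such newforms is empty: S₁^new(N,χ) = 0. -/
theorem no_weight_one_newforms_steinberg (p N : ℕ) (hp : p.Prime) (hpN : N.factorization p = 1)
    (χ : DirichletCharacter ℂ N) (hχp : ¬ p ∣ χ.conductor)
    (F : Type*) -- the set of weight 1 newforms of level N and character χ
    (ap : F → ℂ) -- the p-th Fourier coefficient
    (hLi : ∀ f : F, ‖ap f‖ = Real.sqrt p)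
    (hDS : ∀ f : F, ap f = 0 ∨ ∃ n, 0 < n ∧ (ap f) ^ n = 1) :
    IsEmpty F :=
  no_weight_one_newforms_steinberg_general p hp F ap hLi hDS
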